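/- arXiv:2405.03772 — 6 statements merged into one kernel-verified Lean document; each statement's English description precedes it below -/
import Mathlib

section
/- Let G be any group and let c : G → Fin r be any coloring of G. Then the set {y ∈ G : {x ∈ G : c(x) = c(x·y) ∧ c(x·y) = c(y·x)} is piecewise syndetic} is piecewise syndetic. -/
/-- A set `T ⊆ G` is (right) thick if for every finite `F ⊆ G` there is `t ∈ T`
with `F·t ⊆ T`. -/
def RightThick {G : Type*} [Group G] (T : Set G) : Prop :=
  ∀ F : Finset G, ∃ t ∈ T, ∀ f ∈ F, f * t ∈ T

/-- A set `S ⊆ G` is (left) syndetic if there is a finite `F ⊆ G` with `F⁻¹·S = G`. -/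
def LeftSyndetic {G : Type*} [Group G] (S : Set G) : Prop :=
  ∃ F : Finset G, ∀ g : G, ∃ f ∈ F, f * g ∈ S

/-- A set is piecewise syndetic if it is the intersection of a syndetic set and a
thick set. -/
def PiecewiseSyndetic {G : Type*} [Group G] (A : Set G) : Prop :=
  ∃ S T : Set G, LeftSyndetic S ∧ RightThick T ∧ A = S ∩ T

open Filter Set

attribute [local instance] Ultrafilter.mul Ultrafilter.semigroup

namespace PiecewiseSyndeticAux

variable {G : Type*} [Group G]

theorem uf_mem_mul {u v : Ultrafilter G} {A : Set G} :
    A ∈ u * v ↔ {z : G | {x : G | z * x ∈ A} ∈ v} ∈ u := by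
  have h := Ultrafilter.eventually_mul u v (· ∈ A)
  simpa only [Filter.eventually_iff, Ultrafilter.mem_coe, Set.setOf_mem_eq] using h

theorem uf_mem_pure_mul {v : Ultrafilter G} {A : Set G} (f : G) :
    A ∈ (pure f : Ultrafilter G) * v ↔ {x : G | f * x ∈ A} ∈ v := by
  rw [uf_mem_mul]; simp

theorem ps_mono {A B : Set G} (hAB : A ⊆ B) (hA : PiecewiseSyndetic A) :
    PiecewiseSyndetic B := by
  obtain ⟨S, T, ⟨F, hF⟩, hT, rfl⟩ := hA
  refine ⟨S ∪ B, T ∪ B, ⟨F, fun g => ?_⟩, fun F' => ?_, ?_⟩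
  · obtain ⟨f, hf, hfg⟩ := hF g
    exact ⟨f, hf, Or.inl hfg⟩
  · obtain ⟨t, ht, hft⟩ := hT F'
    exact ⟨t, Or.inl ht, fun f hf => Or.inl (hft f hf)⟩
  · ext x
    constructor
    · intro hx; exact ⟨Or.inr hx, Or.inr hx⟩
    · rintro ⟨h1 | h1, h2 | h2⟩
      · exact hAB ⟨h1, h2⟩
      · exact h2
      · exact h1
      · exact h1

theorem ps_shift {B : Set G} (hB : PiecewiseSyndetic B) (g : G) :
    PiecewiseSyndetic {x : G | x * g ∈ B} := by
  obtain ⟨S, T, ⟨F, hF⟩, hT, rfl⟩ := hB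
  refine ⟨{x | x * g ∈ S}, {x | x * g ∈ T}, ⟨F, fun h => ?_⟩, fun F' => ?_, ?_⟩
  · obtain ⟨f, hf, hfg⟩ := hF (h * g)
    exact ⟨f, hf, by simpa [mul_assoc] using hfg⟩
  · obtain ⟨t, ht, hft⟩ := hT F'
    refine ⟨t * g⁻¹, by simpa using ht, fun f hf => ?_⟩
    simpa [mul_assoc] using hft f hf
  · ext x; simp [Set.mem_inter_iff]

omit [Group G] in
theorem exists_color {r : ℕ} (c : G → Fin r) (u : Ultrafilter G) :
    ∃ j : Fin r, {x : G | c x = j} ∈ u := by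
  have huniv : (⋃ j ∈ (Set.univ : Set (Fin r)), {x : G | c x = j}) ∈ u := by
    refine Filter.mem_of_superset Filter.univ_mem ?_
    intro x _
    exact Set.mem_biUnion (Set.mem_univ (c x)) rfl
  rw [Ultrafilter.finite_biUnion_mem_iff Set.finite_univ] at huniv
  obtain ⟨j, _, hj⟩ := huniv
  exact ⟨j, hj⟩

/-- There is an idempotent ultrafilter all of whose members are piecewise syndetic. -/
theorem exists_good_idem :
    ∃ p : Ultrafilter G, p * p = p ∧ ∀ A ∈ p, PiecewiseSyndetic A := by
  classical
  set S : Set (Set (Ultrafilter G)) :=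
    {L | L.Nonempty ∧ IsClosed L ∧ ∀ (u : Ultrafilter G), ∀ v ∈ L, u * v ∈ L} with hS
  have huniv : (univ : Set (Ultrafilter G)) ∈ S :=
    ⟨⟨pure 1, trivial⟩, isClosed_univ, fun _ _ _ => trivial⟩
  obtain ⟨L, -, hLmem, hLmin⟩ : ∃ L, L ⊆ univ ∧ Minimal (· ∈ S) L := by
    apply zorn_superset_nonempty S ?_ univ huniv
    intro c hcS hchain hcne
    refine ⟨⋂₀ c, ⟨?_, isClosed_sInter fun t ht => (hcS ht).2.1, ?_⟩,
      fun s hs => sInter_subset_of_mem hs⟩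
    · haveI : Nonempty c := hcne.to_subtype
      apply IsCompact.nonempty_sInter_of_directed_nonempty_isCompact_isClosed
      · intro x hx y hy
        rcases hchain.total hx hy with h | h
        · exact ⟨x, hx, subset_rfl, h⟩
        · exact ⟨y, hy, h, subset_rfl⟩
      · exact fun U hU => (hcS hU).1
      · exact fun U hU => (hcS hU).2.1.isCompact
      · exact fun U hU => (hcS hU).2.1
    · exact fun u v hv t ht => (hcS ht).2.2 u v (hv t ht)
  obtain ⟨hLne, hLclosed, hLideal⟩ := hLmem
  obtain ⟨p, hpL, hpp⟩ :=
    exists_idempotent_in_compact_subsemigroup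
      (fun r => Ultrafilter.continuous_mul_left r) L hLne hLclosed.isCompact
      (fun x _ y hy => hLideal x y hy)
  refine ⟨p, hpp, ?_⟩
  intro A hA
  -- every element of the minimal left ideal `L` sees a left translate of `A`
  have cover : ∀ v ∈ L, ∃ z : G, {x : G | z * x ∈ A} ∈ v := by
    intro v hv
    have hrange_sub : Set.range (· * v) ⊆ L := by
      rintro w ⟨m, rfl⟩; exact hLideal m v hv
    have hrange : Set.range (· * v) ∈ S := by
      refine ⟨⟨v * v, v, rfl⟩,
        (isCompact_range (Ultrafilter.continuous_mul_left v)).isClosed, ?_⟩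
      rintro u w ⟨m, rfl⟩
      exact ⟨u * m, mul_assoc u m v⟩
    obtain ⟨m, hm⟩ := hLmin hrange hrange_sub hpL
    have hAm : A ∈ m * v := by
      show A ∈ (· * v) m
      rw [hm]; exact hA
    rw [uf_mem_mul] at hAm
    obtain ⟨z, hz⟩ := m.nonempty_of_mem hAm
    exact ⟨z, hz⟩
  have hcov : L ⊆ ⋃ z : G, {v : Ultrafilter G | {x : G | z * x ∈ A} ∈ v} := by
    intro v hv
    obtain ⟨z, hz⟩ := cover v hv
    exact Set.mem_iUnion.2 ⟨z, hz⟩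
  obtain ⟨F0, hF0⟩ := hLclosed.isCompact.elim_finite_subcover
    (fun z : G => {v : Ultrafilter G | {x : G | z * x ∈ A} ∈ v})
    (fun z => ultrafilter_isOpen_basic _) hcov
  set F : Finset G := insert 1 F0 with hF
  set B : Set G := {x : G | ∃ f ∈ F, f * x ∈ A} with hB
  have hAB : A ⊆ B := fun x hx => ⟨1, Finset.mem_insert_self 1 F0, by simpa using hx⟩
  have hBv : ∀ v ∈ L, B ∈ v := by
    intro v hv
    have hv2 := hF0 hv
    rw [Set.mem_iUnion₂] at hv2
    obtain ⟨z, hzF, hz⟩ := hv2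
    exact Filter.mem_of_superset hz
      (fun x hx => ⟨z, Finset.mem_insert_of_mem hzF, hx⟩)
  have hBthick : RightThick B := by
    intro F'
    obtain ⟨v, hv⟩ := hLne
    have h2 : (⋂ f ∈ (F' : Set G), {t : G | f * t ∈ B}) ∈ v := by
      rw [← Ultrafilter.mem_coe, Filter.biInter_mem F'.finite_toSet]
      intro f _
      have hfv : B ∈ (pure f : Ultrafilter G) * v := hBv _ (hLideal _ v hv)
      rwa [uf_mem_pure_mul] at hfv
    obtain ⟨t, htB, ht2⟩ := v.nonempty_of_mem (Filter.inter_mem (hBv v hv) h2)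
    refine ⟨t, htB, fun f hf => ?_⟩
    simpa using Set.mem_iInter₂.1 ht2 f hf
  refine ⟨A ∪ Bᶜ, B, ⟨F, fun g => ?_⟩, hBthick, ?_⟩
  · by_cases hg : g ∈ B
    · obtain ⟨f, hf, hfg⟩ := hg
      exact ⟨f, hf, Or.inl hfg⟩
    · exact ⟨1, Finset.mem_insert_self 1 F0, Or.inr (by simpa using hg)⟩
  · ext x
    constructor
    · intro hx; exact ⟨Or.inl hx, hAB hx⟩
    · rintro ⟨hx | hx, hxB⟩
      · exact hx
      · exact absurd hxB hx

end PiecewiseSyndeticAux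

open PiecewiseSyndeticAux in
theorem piecewiseSyndetic_x_xy_yx {G : Type*} [Group G] (r : ℕ) (c : G → Fin r) :
    PiecewiseSyndetic {y : G |
      PiecewiseSyndetic {x : G | c x = c (x * y) ∧ c (x * y) = c (y * x)}} := by
  classical
  obtain ⟨p, hpp, hPS⟩ := exists_good_idem (G := G)
  have star : ∀ A ∈ p, {z : G | {x : G | z * x ∈ A} ∈ p} ∈ p := by
    intro A hA
    rw [← hpp] at hA
    rwa [uf_mem_mul] at hA
  obtain ⟨j, hj⟩ :=
    exists_color (fun w : G => (exists_color c (p.map (· * w))).choose) p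
  set D : Set G := {w : G | {x : G | c (x * w) = j} ∈ p} with hD
  have hDp : D ∈ p := by
    refine Filter.mem_of_superset hj ?_
    intro w hw
    have hspec := (exists_color c (p.map (· * w))).choose_spec
    rw [show (exists_color c (p.map (· * w))).choose = j from hw] at hspec
    rw [Ultrafilter.mem_map] at hspec
    exact hspec
  have hJ2 : {w : G | {y : G | w * y ∈ D} ∈ p} ∈ p := star D hDp
  obtain ⟨w, hwD, hwJ2⟩ := p.nonempty_of_mem (Filter.inter_mem hDp hJ2)
  set v : Ultrafilter G := p.map (· * w) with hv
  set C : Set G := {x : G | c x = j} with hC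
  have hCv : C ∈ v := by
    rw [Ultrafilter.mem_map]
    exact hwD
  have hbeta : {y : G | {x : G | x * y ∈ C} ∈ v} ∈ p := by
    refine Filter.mem_of_superset hwJ2 ?_
    intro y hy
    rw [Set.mem_setOf_eq, Ultrafilter.mem_map]
    have hy' : {x : G | c (x * (w * y)) = j} ∈ p := hy
    refine Filter.mem_of_superset hy' ?_
    intro x hx
    show (x * w) * y ∈ C
    rw [hC]
    simpa [mul_assoc] using hx
  have hB0 : {x : G | x * w ∈ C} ∈ p := hwD
  have hgamma : {y : G | {x : G | y * x ∈ C} ∈ v} ∈ p := by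
    refine Filter.mem_of_superset (star _ hB0) ?_
    intro y hy
    rw [Set.mem_setOf_eq, Ultrafilter.mem_map]
    refine Filter.mem_of_superset hy ?_
    intro x hx
    show y * (x * w) ∈ C
    have : (y * x) * w ∈ C := hx
    simpa [mul_assoc] using this
  have hY0 := Filter.inter_mem hbeta hgamma
  refine ps_mono ?_ (hPS _ hY0)
  rintro y ⟨hy1, hy2⟩
  have hWv : (C ∩ {x | x * y ∈ C} ∩ {x | y * x ∈ C}) ∈ v :=
    Filter.inter_mem (Filter.inter_mem hCv hy1) hy2
  have hAy : {x : G | c x = c (x * y) ∧ c (x * y) = c (y * x)} ∈ v := by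
    refine Filter.mem_of_superset hWv ?_
    rintro x ⟨⟨h1, h2⟩, h3⟩
    have h1' : c x = j := h1
    have h2' : c (x * y) = j := h2
    have h3' : c (y * x) = j := h3
    exact ⟨h1'.trans h2'.symm, h2'.trans h3'.symm⟩
  rw [Ultrafilter.mem_map] at hAy
  have hps := ps_shift (hPS _ hAy) w⁻¹
  have hset : {x : G | x * w⁻¹ ∈ ((· * w) ⁻¹'
      {x : G | c x = c (x * y) ∧ c (x * y) = c (y * x)})} =
      {x : G | c x = c (x * y) ∧ c (x * y) = c (y * x)} := by
    ext x
    simp [inv_mul_cancel_right]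
  rw [hset] at hps
  exact hps
end

section
/- Let G be a group carrying an invariant finitely additive probability measure μ and let ε > 0. There exists K ∈ ℕ such that for every A ⊆ G with μ(A) > ε and every sequence y_0, y_1, …, y_K of elements of G, there exist indices 0 ≤ i ≤ j ≤ K such that, setting y = y_i·y_{i+1}⋯y_j, we have μ(A ∩ {a·y⁻¹ : a ∈ A}) > ε²/2. -/
/-- A two-sided invariant finitely additive probability measure on a group `G`. -/
structure IsInvFAPM {G : Type*} [Group G] (μ : Set G → ℝ) : Prop where
  nonneg : ∀ A : Set G, 0 ≤ μ A
  total : μ (Set.univ : Set G) = 1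
  additive : ∀ A B : Set G, Disjoint A B → μ (A ∪ B) = μ A + μ B
  left_invariant : ∀ (g : G) (A : Set G), μ ((g * ·) '' A) = μ A
  right_invariant : ∀ (g : G) (A : Set G), μ ((· * g) '' A) = μ A

namespace DPRaux

variable {G : Type*} [Group G] {μ : Set G → ℝ}

lemma mono (hμ : IsInvFAPM μ) {A B : Set G} (h : A ⊆ B) : μ A ≤ μ B := by
  have h1 : μ (A ∪ B \ A) = μ A + μ (B \ A) := hμ.additive _ _ disjoint_sdiff_self_right
  rw [Set.union_diff_cancel h] at h1
  have := hμ.nonneg (B \ A)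
  linarith

lemma le_one (hμ : IsInvFAPM μ) (A : Set G) : μ A ≤ 1 :=
  hμ.total ▸ mono hμ (Set.subset_univ A)

lemma measure_empty (hμ : IsInvFAPM μ) : μ (∅ : Set G) = 0 := by
  have := hμ.additive ∅ ∅ (by simp)
  simp at this
  linarith

lemma incl_excl (hμ : IsInvFAPM μ) (A B : Set G) :
    μ (A ∪ B) + μ (A ∩ B) = μ A + μ B := by
  have h1 : μ (A ∪ B \ A) = μ A + μ (B \ A) := hμ.additive _ _ disjoint_sdiff_self_right
  rw [Set.union_diff_self] at h1
  have h2 : μ (B ∩ A ∪ B \ A) = μ (B ∩ A) + μ (B \ A) :=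
    hμ.additive _ _ (disjoint_sdiff_self_right.mono_left Set.inter_subset_right)
  rw [Set.inter_union_diff] at h2
  rw [Set.inter_comm A B]
  linarith

lemma subadd2 (hμ : IsInvFAPM μ) (A B : Set G) : μ (A ∪ B) ≤ μ A + μ B := by
  have := incl_excl hμ A B
  have := hμ.nonneg (A ∩ B)
  linarith

lemma subadd_fin (hμ : IsInvFAPM μ) (D : ℕ → Set G) (n : ℕ) :
    μ (⋃ i ∈ Finset.range n, D i) ≤ ∑ i ∈ Finset.range n, μ (D i) := by
  induction n with
  | zero => simp [measure_empty hμ]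
  | succ n ih =>
    rw [Finset.range_add_one, Finset.set_biUnion_insert, Finset.sum_insert Finset.notMem_range_self]
    have := subadd2 hμ (D n) (⋃ i ∈ Finset.range n, D i)
    linarith

lemma bonf (hμ : IsInvFAPM μ) (C : ℕ → Set G) (n : ℕ) :
    (∑ i ∈ Finset.range n, μ (C i))
      - ∑ j ∈ Finset.range n, ∑ i ∈ Finset.range j, μ (C i ∩ C j)
      ≤ μ (⋃ i ∈ Finset.range n, C i) := by
  induction n with
  | zero => simp [measure_empty hμ]
  | succ n ih =>
    rw [Finset.range_add_one, Finset.set_biUnion_insert,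
      Finset.sum_insert Finset.notMem_range_self, Finset.sum_insert Finset.notMem_range_self]
    have h1 := incl_excl hμ (C n) (⋃ i ∈ Finset.range n, C i)
    have h2 : μ (C n ∩ ⋃ i ∈ Finset.range n, C i) ≤ ∑ i ∈ Finset.range n, μ (C i ∩ C n) := by
      have heq : C n ∩ (⋃ i ∈ Finset.range n, C i) = ⋃ i ∈ Finset.range n, (C i ∩ C n) := by
        ext x
        simp only [Set.mem_inter_iff, Set.mem_iUnion]
        tauto
      rw [heq]
      exact subadd_fin hμ _ n
    linarith

/-- Extension of `y` to `ℕ`. -/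
def zfun {n : ℕ} (y : Fin (n + 1) → G) : ℕ → G :=
  fun k => if h : k < n + 1 then y ⟨k, h⟩ else 1

/-- Prefix products. -/
def P {n : ℕ} (y : Fin (n + 1) → G) (k : ℕ) : G :=
  ((List.range k).map (zfun y)).prod

lemma sort_Icc_nat (a b : ℕ) :
    (Finset.Icc a b).sort (· ≤ ·) = List.range' a (b + 1 - a) := by
  haveI : IsAntisymm ℕ (fun x1 x2 => x1 ≤ x2) := ⟨fun _ _ => le_antisymm⟩
  refine (fun hp h1 h2 => List.Perm.eq_of_pairwise' (r := fun x1 x2 => x1 ≤ x2) h1 h2 hp) ?_ ?_ ?_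
  · rw [← Multiset.coe_eq_coe, Finset.sort_eq, Nat.Icc_eq_range']
  · exact Finset.pairwise_sort _ _
  · exact List.pairwise_le_range' (s := a) (n := _)

lemma sort_Icc_fin {n : ℕ} (i j : Fin n) :
    ((Finset.Icc i j).sort (· ≤ ·)).map Fin.val = (Finset.Icc i.val j.val).sort (· ≤ ·) := by
  haveI : IsAntisymm ℕ (fun x1 x2 => x1 ≤ x2) := ⟨fun _ _ => le_antisymm⟩
  refine (fun hp h1 h2 => List.Perm.eq_of_pairwise' (r := fun x1 x2 => x1 ≤ x2) h1 h2 hp) ?_ ?_ ?_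
  · rw [← Multiset.coe_eq_coe]
    have h1 : (↑((((Finset.Icc i j).sort (· ≤ ·))).map Fin.val) : Multiset ℕ)
        = ((Finset.Icc i j).map Fin.valEmbedding).1 := by
      rw [Finset.map_val, ← Finset.sort_eq (Finset.Icc i j) (· ≤ ·), Multiset.map_coe]
      rfl
    rw [h1, Fin.map_valEmbedding_Icc, Finset.sort_eq]
  · have hs := Finset.pairwise_sort (α := Fin n) (Finset.Icc i j) (· ≤ ·)
    exact List.Pairwise.map Fin.val (fun a b h => Fin.le_def.mp h) hs
  · exact Finset.pairwise_sort _ _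

lemma prod_Icc_eq {n : ℕ} (y : Fin (n + 1) → G) (i j : Fin (n + 1)) (hij : i ≤ j) :
    (((Finset.Icc i j).sort (· ≤ ·)).map y).prod = (P y i.val)⁻¹ * P y (j.val + 1) := by
  have hmap : ((Finset.Icc i j).sort (· ≤ ·)).map y
      = (((Finset.Icc i j).sort (· ≤ ·)).map Fin.val).map (zfun y) := by
    rw [List.map_map]
    apply List.map_congr_left
    intro a _
    simp [zfun, a.isLt]
  rw [hmap, sort_Icc_fin, sort_Icc_nat]
  have hsplit : List.range i.val ++ List.range' i.val (j.val + 1 - i.val)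
      = List.range (j.val + 1) := by
    rw [List.range_eq_range', List.range_eq_range']
    have h := List.range'_append (s := 0) (m := i.val) (n := j.val + 1 - i.val) (step := 1)
    simp only [Nat.zero_add, Nat.one_mul, Nat.mul_one] at h
    have hvle : i.val ≤ j.val := hij
    rw [show i.val + (j.val + 1 - i.val) = j.val + 1 by omega] at h
    exact h
  have hprod : P y (j.val + 1) = P y i.val * ((List.range' i.val (j.val + 1 - i.val)).map (zfun y)).prod := by
    rw [P, P, ← hsplit, List.map_append, List.prod_append]
  rw [hprod]
  group

lemma meas_shift (hμ : IsInvFAPM μ) (A : Set G) (g : G) :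
    μ ((· * g) ⁻¹' A) = μ A := by
  rw [← Set.image_mul_right']
  exact hμ.right_invariant _ _

lemma meas_inter (hμ : IsInvFAPM μ) (A : Set G) (g h : G) :
    μ (((· * g) ⁻¹' A) ∩ ((· * h) ⁻¹' A)) = μ (A ∩ ((· * (g⁻¹ * h)⁻¹) '' A)) := by
  have himg : ((· * g⁻¹) '' (A ∩ ((· * (g⁻¹ * h)⁻¹) '' A)))
      = ((· * g) ⁻¹' A) ∩ ((· * h) ⁻¹' A) := by
    rw [Set.image_mul_right, Set.image_mul_right, inv_inv, inv_inv]
    ext x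
    simp only [Set.mem_preimage, Set.mem_inter_iff]
    constructor
    · rintro ⟨h1, h2⟩
      refine ⟨h1, ?_⟩
      rw [show x * g * (g⁻¹ * h) = x * h by group] at h2
      exact h2
    · rintro ⟨h1, h2⟩
      refine ⟨h1, ?_⟩
      rw [show x * g * (g⁻¹ * h) = x * h by group]
      exact h2
  rw [← himg, hμ.right_invariant]

end DPRaux

open DPRaux in
theorem density_pigeonhole_right {G : Type*} [Group G] (μ : Set G → ℝ)
    (hμ : IsInvFAPM μ) (ε : ℝ) (hε : 0 < ε) :
    ∃ K : ℕ, ∀ A : Set G, ε < μ A → ∀ y : Fin (K + 1) → G,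
      ∃ i j : Fin (K + 1), i ≤ j ∧
        ε ^ 2 / 2 <
          μ (A ∩ ((· * ((((Finset.Icc i j).sort (· ≤ ·)).map y).prod)⁻¹) '' A)) := by
  set K : ℕ := ⌈2 / ε⌉₊ - 2 with hKdef
  refine ⟨K, fun A hA y => ?_⟩
  by_contra hcon
  push_neg at hcon
  have hA1 : μ A ≤ 1 := le_one hμ A
  have hε1 : ε < 1 := lt_of_lt_of_le hA hA1
  have hlt : (2 : ℝ) < 2 / ε := by
    rw [lt_div_iff₀ hε]; nlinarith
  have hn2 : 2 < ⌈2 / ε⌉₊ := Nat.lt_ceil.mpr (by exact_mod_cast hlt)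
  set n : ℕ := K + 2 with hn
  have hnceil : n = ⌈2 / ε⌉₊ := by omega
  set C : ℕ → Set G := fun k => (· * P y k) ⁻¹' A with hC
  have hCm : ∀ k, μ (C k) = μ A := fun k => meas_shift hμ A _
  have hpair : ∀ i' j', i' < j' → j' < n → μ (C i' ∩ C j') ≤ ε ^ 2 / 2 := by
    intro i' j' hlt' hj
    have hi : i' < K + 1 := by omega
    have hjm : j' - 1 < K + 1 := by omega
    have hle : (⟨i', hi⟩ : Fin (K + 1)) ≤ ⟨j' - 1, hjm⟩ := by
      simp only [Fin.mk_le_mk]; omega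
    have hb := hcon ⟨i', hi⟩ ⟨j' - 1, hjm⟩ hle
    rw [prod_Icc_eq y _ _ hle] at hb
    have hj1 : (j' - 1) + 1 = j' := by omega
    simp only [hj1] at hb
    calc μ (C i' ∩ C j') = μ (A ∩ ((· * ((P y i')⁻¹ * P y j')⁻¹) '' A)) :=
          meas_inter hμ A _ _
      _ ≤ ε ^ 2 / 2 := hb
  set S : ℝ := ∑ j' ∈ Finset.range n, ∑ i' ∈ Finset.range j', μ (C i' ∩ C j') with hS
  set T : ℝ := ∑ j' ∈ Finset.range n, (j' : ℝ) with hT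
  have hSb : S ≤ T * (ε ^ 2 / 2) := by
    rw [hS, hT, Finset.sum_mul]
    apply Finset.sum_le_sum
    intro j' hj'
    calc ∑ i' ∈ Finset.range j', μ (C i' ∩ C j')
        ≤ ∑ i' ∈ Finset.range j', (ε ^ 2 / 2) :=
          Finset.sum_le_sum fun i' hi' =>
            hpair i' j' (Finset.mem_range.mp hi') (Finset.mem_range.mp hj')
      _ = (j' : ℝ) * (ε ^ 2 / 2) := by
          rw [Finset.sum_const, Finset.card_range, nsmul_eq_mul]
  have hTval : T * 2 = (n : ℝ) * ((n : ℝ) - 1) := by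
    rw [hT]
    have := Finset.sum_range_id_mul_two n
    have h2 : ((∑ i ∈ Finset.range n, i) * 2 : ℕ) = (n * (n - 1) : ℕ) := this
    have h3 : ((∑ i ∈ Finset.range n, i : ℕ) : ℝ) * 2 = (n : ℝ) * (((n : ℕ) - 1 : ℕ) : ℝ) := by
      exact_mod_cast congrArg (Nat.cast : ℕ → ℝ) h2
    rw [Nat.cast_sub (by omega), Nat.cast_one] at h3
    rw [← h3]
    norm_num [Nat.cast_sum]
  have hsum : ∑ i ∈ Finset.range n, μ (C i) = (n : ℝ) * μ A := by
    simp [hCm]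
  have hbonf := bonf hμ C n
  rw [hsum] at hbonf
  have hU : μ (⋃ i ∈ Finset.range n, C i) ≤ 1 := le_one hμ _
  have h5 : 2 / ε ≤ (n : ℝ) := by rw [hnceil]; exact Nat.le_ceil _
  have h6 : (n : ℝ) < 2 / ε + 1 := by
    rw [hnceil]
    exact Nat.ceil_lt_add_one (by positivity)
  have hne : 2 ≤ (n : ℝ) * ε := by
    rw [div_le_iff₀ hε] at h5; linarith
  have hne2 : ((n : ℝ) - 1) * ε < 2 := by
    have h7 : (n : ℝ) - 1 < 2 / ε := by linarith
    rw [lt_div_iff₀ hε] at h7; linarith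
  have hnpos : (2 : ℝ) ≤ (n : ℝ) := by
    have : 2 ≤ n := by omega
    exact_mod_cast this
  nlinarith [mul_lt_mul_of_pos_left hA (lt_of_lt_of_le (by norm_num : (0:ℝ) < 2) hnpos),
    mul_pos (lt_of_lt_of_le (by linarith : (0:ℝ) < 2) hne) hε]
end

section
/- Let G be a group carrying an invariant finitely additive probability measure μ and let ε > 0. There exists K ∈ ℕ such that for every A ⊆ G with μ(A) > ε and every sequence y_0, y_1, …, y_K of elements of G, there exist indices 0 ≤ i ≤ j ≤ K such that, setting y = y_i·y_{i+1}⋯y_j, we have μ({y⁻¹·a : a ∈ A} ∩ A) > ε²/2. -/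
section aux

variable {G : Type*} [Group G] {μ : Set G → ℝ}

lemma IsInvFAPM.empty (hμ : IsInvFAPM μ) : μ ∅ = 0 := by
  have := hμ.additive ∅ ∅ (disjoint_bot_left)
  simp at this
  linarith

lemma IsInvFAPM.mono (hμ : IsInvFAPM μ) {A B : Set G} (h : A ⊆ B) : μ A ≤ μ B := by
  have hU : A ∪ (B \ A) = B := Set.union_diff_cancel h
  have h2 := hμ.additive A (B \ A) disjoint_sdiff_self_right
  rw [hU] at h2
  have := hμ.nonneg (B \ A)
  linarith

lemma IsInvFAPM.biUnion (hμ : IsInvFAPM μ) {α : Type*} [DecidableEq α] (s : Finset α)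
    (f : α → Set G) (hdisj : ∀ a ∈ s, ∀ b ∈ s, a ≠ b → Disjoint (f a) (f b)) :
    μ (⋃ a ∈ s, f a) = ∑ a ∈ s, μ (f a) := by
  induction s using Finset.induction with
  | empty => simpa using hμ.empty
  | @insert a s ha ih =>
      rw [Finset.sum_insert ha, Finset.set_biUnion_insert]
      rw [hμ.additive _ _ ?_, ih ?_]
      · intro x hx y hy hxy
        exact hdisj x (Finset.mem_insert_of_mem hx) y (Finset.mem_insert_of_mem hy) hxy
      · rw [Set.disjoint_iUnion₂_right]
        intro b hb
        exact hdisj a (Finset.mem_insert_self a s) b (Finset.mem_insert_of_mem hb)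
          (by rintro rfl; exact ha hb)

open Finset in
/-- Among `N ≥ 2/ε² + 1` sets of measure `> ε`, two intersect in measure `> ε²/2`. -/
lemma exists_pair (hμ : IsInvFAPM μ) {N : ℕ} (B : Fin N → Set G) {ε : ℝ} (hε : 0 < ε)
    (hB : ∀ k, ε < μ (B k)) (hN : 2 / ε ^ 2 + 1 ≤ (N : ℝ)) :
    ∃ k l : Fin N, k < l ∧ ε ^ 2 / 2 < μ (B k ∩ B l) := by
  classical
  have hε2 : 0 < ε ^ 2 := by positivity
  have hN0 : 0 < (N : ℝ) := by
    have : 0 < 2 / ε ^ 2 := by positivity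
    linarith
  have hN1 : 0 < N := by exact_mod_cast hN0
  by_contra hcon
  push_neg at hcon
  set atom : Finset (Fin N) → Set G := fun S => {x | ∀ k, x ∈ B k ↔ k ∈ S} with hatom
  have hdisj : ∀ S ∈ (univ : Finset (Finset (Fin N))), ∀ T ∈ univ, S ≠ T →
      Disjoint (atom S) (atom T) := by
    intro S _ T _ hST
    rw [Set.disjoint_left]
    intro x hxS hxT
    exact hST (Finset.ext fun k => ((hxS k).symm.trans (hxT k)))
  have hxatom : ∀ x : G, x ∈ atom (univ.filter (fun k => x ∈ B k)) := by
    intro x k; simp [hatom]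
  -- cover lemma
  have cover : ∀ (C : Set G) (P : Finset (Fin N) → Prop) [DecidablePred P],
      (∀ x : G, x ∈ C ↔ P (univ.filter (fun k => x ∈ B k))) →
      μ C = ∑ S ∈ univ.filter P, μ (atom S) := by
    intro C P _ hCP
    have : C = ⋃ S ∈ univ.filter P, atom S := by
      ext x
      constructor
      · intro hx
        exact Set.mem_biUnion (Finset.mem_filter.2 ⟨mem_univ _, (hCP x).1 hx⟩) (hxatom x)
      · intro hx
        obtain ⟨S, hS, hxS⟩ := Set.mem_iUnion₂.1 hx
        have hSeq : S = univ.filter (fun k => x ∈ B k) := by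
          by_contra hne
          exact (Set.disjoint_left.1 (hdisj S (mem_univ _) _ (mem_univ _) hne)) hxS (hxatom x)
        rw [hSeq] at hS
        exact (hCP x).2 (Finset.mem_filter.1 hS).2
    rw [this, hμ.biUnion _ _ (fun a _ b _ hab => hdisj a (mem_univ _) b (mem_univ _) hab)]
  set w : Finset (Fin N) → ℝ := fun S => μ (atom S) with hw
  have hw0 : ∀ S, 0 ≤ w S := fun S => hμ.nonneg _
  have hsum1 : ∑ S : Finset (Fin N), w S = 1 := by
    have := cover Set.univ (fun _ => True) (fun x => by simp)
    simpa [hμ.total] using this.symm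
  have hinter : ∀ k l : Fin N,
      μ (B k ∩ B l) = ∑ S ∈ univ.filter (fun S => k ∈ S ∧ l ∈ S), w S := by
    intro k l
    exact cover _ _ (fun x => by simp)
  have hone : ∀ k : Fin N, μ (B k) = ∑ S ∈ univ.filter (fun S => k ∈ S), w S := by
    intro k
    have := hinter k k
    simpa [Set.inter_self, and_self] using this
  -- first moment
  have hfirst : ∑ k : Fin N, μ (B k) = ∑ S : Finset (Fin N), w S * (S.card : ℝ) := by
    simp_rw [hone, Finset.sum_filter]
    rw [Finset.sum_comm]
    congr 1
    funext S
    rw [Finset.sum_ite_mem, Finset.univ_inter, Finset.sum_const, nsmul_eq_mul, mul_comm]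
  -- second moment
  have hsecond : ∑ k : Fin N, ∑ l : Fin N, μ (B k ∩ B l)
      = ∑ S : Finset (Fin N), w S * (S.card : ℝ) ^ 2 := by
    have hstep : ∀ k : Fin N, ∑ l : Fin N, μ (B k ∩ B l)
        = ∑ S : Finset (Fin N), (if k ∈ S then w S * (S.card : ℝ) else 0) := by
      intro k
      simp_rw [hinter, Finset.sum_filter]
      rw [Finset.sum_comm]
      congr 1
      funext S
      by_cases hk : k ∈ S
      · simp only [hk, true_and, if_true]
        rw [Finset.sum_ite_mem, Finset.univ_inter, Finset.sum_const, nsmul_eq_mul, mul_comm]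
      · simp [hk]
    simp_rw [hstep]
    rw [Finset.sum_comm]
    congr 1
    funext S
    rw [Finset.sum_ite_mem, Finset.univ_inter, Finset.sum_const, nsmul_eq_mul]
    ring
  -- Cauchy–Schwarz
  have hCS : (∑ S : Finset (Fin N), w S * (S.card : ℝ)) ^ 2
      ≤ ∑ S : Finset (Fin N), w S * (S.card : ℝ) ^ 2 := by
    have := Finset.sum_sq_le_sum_mul_sum_of_sq_eq_mul (univ : Finset (Finset (Fin N)))
      (r := fun S => w S * (S.card : ℝ)) (f := fun S => w S)
      (g := fun S => w S * (S.card : ℝ) ^ 2)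
      (fun S _ => hw0 S) (fun S _ => mul_nonneg (hw0 S) (sq_nonneg _))
      (fun S _ => by ring)
    rwa [hsum1, one_mul] at this
  -- lower bound
  have hlow : (N : ℝ) * ε < ∑ k : Fin N, μ (B k) := by
    calc (N : ℝ) * ε = ∑ _k : Fin N, ε := by simp [mul_comm]
      _ < _ := Finset.sum_lt_sum_of_nonempty
          (Finset.univ_nonempty_iff.2 ⟨⟨0, hN1⟩⟩) (fun k _ => hB k)
  -- upper bound
  have hup : ∑ k : Fin N, ∑ l : Fin N, μ (B k ∩ B l)
      ≤ (N : ℝ) * ((N : ℝ) * (ε ^ 2 / 2) + (1 - ε ^ 2 / 2)) := by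
    have hterm : ∀ k l : Fin N,
        μ (B k ∩ B l) ≤ ε ^ 2 / 2 + (if k = l then 1 - ε ^ 2 / 2 else 0) := by
      intro k l
      rcases lt_trichotomy k l with h | h | h
      · simpa [h.ne] using hcon k l h
      · subst h
        simp only [eq_self_iff_true, if_true]
        have : μ (B k ∩ B k) ≤ 1 := by
          rw [← hμ.total]; exact hμ.mono (Set.subset_univ _)
        linarith
      · have := hcon l k h
        rw [Set.inter_comm] at this
        simpa [h.ne'] using this
    calc ∑ k : Fin N, ∑ l : Fin N, μ (B k ∩ B l)
        ≤ ∑ k : Fin N, ∑ l : Fin N, (ε ^ 2 / 2 + (if k = l then 1 - ε ^ 2 / 2 else 0)) :=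
          Finset.sum_le_sum (fun k _ => Finset.sum_le_sum (fun l _ => hterm k l))
      _ = (N : ℝ) * ((N : ℝ) * (ε ^ 2 / 2) + (1 - ε ^ 2 / 2)) := by
          simp [Finset.sum_add_distrib, Finset.sum_ite_eq, mul_comm]
          ring
  have hsq : ((N : ℝ) * ε) ^ 2 < (∑ k : Fin N, μ (B k)) ^ 2 := by
    have h0 : 0 ≤ (N : ℝ) * ε := le_of_lt (mul_pos hN0 hε)
    nlinarith
  rw [hfirst] at hsq
  have h2 : 2 ≤ ((N : ℝ) - 1) * ε ^ 2 := by
    have : 2 / ε ^ 2 ≤ (N : ℝ) - 1 := by linarith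
    calc (2 : ℝ) = 2 / ε ^ 2 * ε ^ 2 := by field_simp
      _ ≤ ((N : ℝ) - 1) * ε ^ 2 := by nlinarith
  nlinarith [hCS, hsecond, hup, hsq]

end aux

section prod

variable {G : Type*} [Group G] {n : ℕ}

lemma sort_Icc_cons (i j : Fin (n + 1)) (h : i < j) :
    (Finset.Icc i j).sort (· ≤ ·) =
      i :: (Finset.Icc (⟨i.1 + 1, lt_of_le_of_lt h j.2⟩ : Fin (n + 1)) j).sort (· ≤ ·) := by
  have hins : Finset.Icc i j
      = insert i (Finset.Icc (⟨i.1 + 1, lt_of_le_of_lt h j.2⟩ : Fin (n + 1)) j) := by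
    ext x
    simp only [Finset.mem_Icc, Finset.mem_insert, Fin.le_def, Fin.lt_def]
    constructor
    · rintro ⟨h1, h2⟩
      rcases eq_or_lt_of_le h1 with h3 | h3
      · left; exact Fin.ext h3.symm
      · right; exact ⟨h3, h2⟩
    · rintro (rfl | ⟨h1, h2⟩)
      · exact ⟨le_refl _, le_of_lt h⟩
      · exact ⟨by simpa using Nat.le_of_succ_le h1, h2⟩
  rw [hins, Finset.sort_insert]
  · intro b hb
    have := (Finset.mem_Icc.1 hb).1
    simp only [Fin.le_def, Fin.val_mk] at this ⊢
    omega
  · intro hmem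
    have := (Finset.mem_Icc.1 hmem).1
    rw [Fin.le_def] at this
    simp at this

/-- Product of `y` over the suffix `[k, n]`, or `1` if `k > n`. -/
def suffixProd (y : Fin (n + 1) → G) (k : ℕ) : G :=
  if h : k < n + 1 then
    ((((Finset.Icc (⟨k, h⟩ : Fin (n + 1)) (Fin.last n)).sort (· ≤ ·)).map y).prod) else 1

lemma suffixProd_succ (y : Fin (n + 1) → G) (k : Fin (n + 1)) :
    suffixProd y k.1 = y k * suffixProd y (k.1 + 1) := by
  rcases eq_or_lt_of_le (Nat.lt_succ_iff.1 k.2) with hk | hk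
  · rw [suffixProd, dif_pos k.2, suffixProd, dif_neg (by omega)]
    simp only [Fin.eta]
    rw [show k = Fin.last n from Fin.ext hk]
    simp [Finset.Icc_self]
  · rw [suffixProd, dif_pos k.2, suffixProd, dif_pos (by omega)]
    have hlt : (⟨k.1, k.2⟩ : Fin (n + 1)) < Fin.last n := by
      rw [Fin.lt_def]; exact hk
    rw [show (⟨k.1, k.2⟩ : Fin (n + 1)) = k from rfl] at hlt ⊢
    rw [sort_Icc_cons k (Fin.last n) hlt]
    simp

lemma prod_sort_Icc_eq (y : Fin (n + 1) → G) :
    ∀ (d : ℕ) (i j : Fin (n + 1)), i ≤ j → j.1 - i.1 = d →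
      ((((Finset.Icc i j).sort (· ≤ ·)).map y).prod) * suffixProd y (j.1 + 1)
        = suffixProd y i.1 := by
  intro d
  induction d with
  | zero =>
      intro i j hij hd
      have : i = j := Fin.ext (by omega)
      subst this
      rw [Finset.Icc_self, Finset.sort_singleton]
      simpa using (suffixProd_succ y i).symm
  | succ d ih =>
      intro i j hij hd
      have hlt : i < j := by rw [Fin.lt_def]; omega
      rw [sort_Icc_cons i j hlt]
      have hle : (⟨i.1 + 1, lt_of_le_of_lt hlt j.2⟩ : Fin (n + 1)) ≤ j := by
        rw [Fin.le_def]; simpa using hlt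
      have := ih (⟨i.1 + 1, lt_of_le_of_lt hlt j.2⟩ : Fin (n + 1)) j hle (by simp; omega)
      simp only [List.map_cons, List.prod_cons]
      rw [mul_assoc, this]
      exact (suffixProd_succ y i).symm

lemma image_mul_mul (g h : G) (A : Set G) :
    (g * ·) '' ((h * ·) '' A) = ((g * h) * ·) '' A := by
  rw [← Set.image_comp]
  congr 1
  funext x
  simp [mul_assoc]

end prod

theorem density_pigeonhole_left {G : Type*} [Group G] (μ : Set G → ℝ)
    (hμ : IsInvFAPM μ) (ε : ℝ) (hε : 0 < ε) :
    ∃ K : ℕ, ∀ A : Set G, ε < μ A → ∀ y : Fin (K + 1) → G,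
      ∃ i j : Fin (K + 1), i ≤ j ∧
        ε ^ 2 / 2 <
          μ ((((((Finset.Icc i j).sort (· ≤ ·)).map y).prod)⁻¹ * ·) '' A ∩ A) := by
  classical
  refine ⟨⌈2 / ε ^ 2⌉₊ + 1, ?_⟩
  set K : ℕ := ⌈2 / ε ^ 2⌉₊ + 1 with hK
  intro A hA y
  set B : Fin (K + 2) → Set G := fun k => ((suffixProd y k.1)⁻¹ * ·) '' A with hB
  have hBmeas : ∀ k, ε < μ (B k) := by
    intro k
    rw [hB, hμ.left_invariant]
    exact hA
  have hN : 2 / ε ^ 2 + 1 ≤ ((K + 2 : ℕ) : ℝ) := by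
    push_cast
    have := Nat.le_ceil (2 / ε ^ 2)
    have hKr : (K : ℝ) = (⌈2 / ε ^ 2⌉₊ : ℝ) + 1 := by exact_mod_cast hK
    linarith
  obtain ⟨k, l, hkl, hgood⟩ := exists_pair hμ B hε hBmeas hN
  have hk1 : k.1 < K + 1 := by omega
  have hl1 : 1 ≤ l.1 := by omega
  refine ⟨⟨k.1, hk1⟩, ⟨l.1 - 1, by omega⟩, by rw [Fin.le_def]; simp; omega, ?_⟩
  have hij : (⟨k.1, hk1⟩ : Fin (K + 1)) ≤ ⟨l.1 - 1, by omega⟩ := by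
    rw [Fin.le_def]; simp; omega
  have hprod := prod_sort_Icc_eq y (l.1 - 1 - k.1) ⟨k.1, hk1⟩ ⟨l.1 - 1, by omega⟩ hij rfl
  have hl1' : l.1 - 1 + 1 = l.1 := by omega
  rw [hl1'] at hprod
  set p := ((((Finset.Icc (⟨k.1, hk1⟩ : Fin (K + 1)) ⟨l.1 - 1, by omega⟩).sort (· ≤ ·)).map
    y).prod) with hp
  have hpval : p = suffixProd y k.1 * (suffixProd y l.1)⁻¹ := by
    rw [← hprod]; group
  have himg : ((p⁻¹ * ·) '' A ∩ A) = (suffixProd y l.1 * ·) '' (B k ∩ B l) := by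
    rw [Set.image_inter (mul_right_injective _)]
    congr 1
    · rw [hB, image_mul_mul, hpval]
      congr 2
      group
    · rw [hB, image_mul_mul]
      simp
  rw [himg, hμ.left_invariant]
  exact hgood
end

section
/- Let G be a group carrying an invariant finitely additive probability measure μ, let ε > 0, and let k, r ∈ ℕ. There exist k' ∈ ℕ and δ > 0, depending only on ε, k and r, with the following property: for every A ⊆ G with μ(A) > ε and all sequences s¹, …, s^r of elements of G each of length k', there exist sequences t¹, …, t^r of elements of G each of length k with FP(tⁱ) ⊆ FP(sⁱ) for each i, and a set B ⊆ A with μ(B) > δ, such that for every i ∈ {1, …, r} and every u ∈ FP(tⁱ) one has {u·b : b ∈ B} ⊆ A. -/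
open Pointwise

/-- `FPinc x` is the set of all products `∏_{i ∈ F} x_i` over nonempty `F`, with the
factors multiplied in increasing order of index. -/
def FPinc {G : Type*} [Group G] {n : ℕ} (x : Fin n → G) : Set G :=
  {g | ∃ F : Finset (Fin n), F.Nonempty ∧ g = ((F.sort (· ≤ ·)).map x).prod}

namespace IDPaux

variable {G : Type*} [Group G] {μ : Set G → ℝ}

lemma meas_mono (hμ : IsInvFAPM μ) {A B : Set G} (h : A ⊆ B) : μ A ≤ μ B := by
  have hadd := hμ.additive A (B \ A) disjoint_sdiff_self_right
  rw [Set.union_diff_cancel h] at hadd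
  linarith [hμ.nonneg (B \ A)]

lemma meas_le_one (hμ : IsInvFAPM μ) (A : Set G) : μ A ≤ 1 :=
  hμ.total ▸ meas_mono hμ (Set.subset_univ A)

lemma meas_empty (hμ : IsInvFAPM μ) : μ (∅ : Set G) = 0 := by
  have := hμ.additive ∅ ∅ (disjoint_bot_left)
  simp only [Set.union_empty] at this
  linarith

lemma meas_smul (hμ : IsInvFAPM μ) (g : G) (C : Set G) : μ (g • C) = μ C :=
  hμ.left_invariant g C

lemma meas_union_le (hμ : IsInvFAPM μ) (A B : Set G) : μ (A ∪ B) ≤ μ A + μ B := by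
  have h1 : A ∪ B = A ∪ (B \ A) := by rw [Set.union_diff_self]
  rw [h1, hμ.additive A (B \ A) disjoint_sdiff_self_right]
  linarith [meas_mono hμ (Set.diff_subset : B \ A ⊆ B)]

lemma meas_biUnion_le (hμ : IsInvFAPM μ) (E : ℕ → Set G) (n : ℕ) :
    μ (⋃ j ∈ Finset.range n, E j) ≤ ∑ j ∈ Finset.range n, μ (E j) := by
  induction n with
  | zero => simp [meas_empty hμ]
  | succ n ih =>
    rw [Finset.range_add_one, Finset.set_biUnion_insert,
      Finset.sum_insert Finset.notMem_range_self]
    calc μ (E n ∪ ⋃ j ∈ Finset.range n, E j)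
        ≤ μ (E n) + μ (⋃ j ∈ Finset.range n, E j) := meas_union_le hμ _ _
      _ ≤ _ := by linarith

lemma pigeon (hμ : IsInvFAPM μ) (M : ℕ) (η : ℝ) (hM : 2 ≤ (M : ℝ) * η) (E : ℕ → Set G)
    (hE : ∀ j < M, η < μ (E j)) :
    ∃ i j, i < j ∧ j < M ∧ ((M : ℝ)⁻¹) ^ 2 < μ (E i ∩ E j) := by
  by_contra hcon
  push_neg at hcon
  set δ' : ℝ := ((M : ℝ)⁻¹) ^ 2 with hδ'
  have hM0 : 0 < M := by
    rcases Nat.eq_zero_or_pos M with h | h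
    · rw [h] at hM; norm_num at hM
    · exact h
  have hM0' : (0 : ℝ) < M := by exact_mod_cast hM0
  set E' : ℕ → Set G := fun j => E j \ ⋃ i ∈ Finset.range j, E i with hE'
  have hdisj : ∀ n, μ (⋃ j ∈ Finset.range n, E' j) = ∑ j ∈ Finset.range n, μ (E' j) := by
    intro n; induction n with
    | zero => simp [meas_empty hμ]
    | succ n ih =>
      rw [Finset.range_add_one, Finset.set_biUnion_insert,
        Finset.sum_insert Finset.notMem_range_self]
      have hd : Disjoint (E' n) (⋃ j ∈ Finset.range n, E' j) := by
        rw [Set.disjoint_right]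
        intro a ha haE
        simp only [Set.mem_iUnion] at ha
        obtain ⟨j, hj, haj⟩ := ha
        exact haE.2 (Set.mem_biUnion hj haj.1)
      rw [hμ.additive _ _ hd, ih]
  have hlow : ∀ j < M, η - (M : ℝ) * δ' < μ (E' j) := by
    intro j hj
    have hpart : μ (E j) = μ (E' j) + μ (E j ∩ ⋃ i ∈ Finset.range j, E i) := by
      conv_lhs => rw [show E j = E' j ∪ (E j ∩ ⋃ i ∈ Finset.range j, E i) from
        (Set.diff_union_inter _ _).symm]
      exact hμ.additive _ _ (Set.disjoint_sdiff_inter)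
    have hsub : μ (E j ∩ ⋃ i ∈ Finset.range j, E i) ≤ (j : ℝ) * δ' := by
      have heq : E j ∩ ⋃ i ∈ Finset.range j, E i = ⋃ i ∈ Finset.range j, (E i ∩ E j) := by
        ext x; simp only [Set.mem_inter_iff, Set.mem_iUnion]; tauto
      rw [heq]
      calc μ (⋃ i ∈ Finset.range j, (E i ∩ E j))
          ≤ ∑ i ∈ Finset.range j, μ (E i ∩ E j) := meas_biUnion_le hμ _ j
        _ ≤ ∑ _i ∈ Finset.range j, δ' :=
            Finset.sum_le_sum fun i hi => hcon i j (Finset.mem_range.mp hi) hj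
        _ = (j : ℝ) * δ' := by rw [Finset.sum_const, Finset.card_range, nsmul_eq_mul]
    have hEj := hE j hj
    have hjM : (j : ℝ) ≤ (M : ℝ) := by exact_mod_cast hj.le
    have hδ'0 : 0 ≤ δ' := by positivity
    nlinarith
  have h1 : μ (⋃ j ∈ Finset.range M, E' j) ≤ 1 := meas_le_one hμ _
  rw [hdisj M] at h1
  have h2 : ∑ _j ∈ Finset.range M, (η - (M : ℝ) * δ') < ∑ j ∈ Finset.range M, μ (E' j) :=
    Finset.sum_lt_sum_of_nonempty (Finset.nonempty_range_iff.mpr (by omega)) fun j hj => hlow j (Finset.mem_range.mp hj)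
  rw [Finset.sum_const, Finset.card_range, nsmul_eq_mul] at h2
  have hMδ : (M : ℝ) * ((M : ℝ) * δ') = 1 := by
    rw [hδ']; field_simp
  nlinarith

noncomputable def stepN (η : ℝ) : ℕ := ⌈2 / η⌉₊

noncomputable def stepδ (η : ℝ) : ℝ := ((stepN η : ℝ)⁻¹) ^ 2

lemma stepδ_pos {η : ℝ} (hη : 0 < η) : 0 < stepδ η := by
  have h : 0 < stepN η := Nat.ceil_pos.mpr (by positivity)
  have h' : (0 : ℝ) < (stepN η : ℝ) := by exact_mod_cast h
  unfold stepδ; positivity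

def LP (f : ℕ → G) (a b : ℕ) : G := ((List.range' a (b - a)).map f).prod

lemma LP_append (f : ℕ → G) {a b c : ℕ} (hab : a ≤ b) (hbc : b ≤ c) :
    LP f a b * LP f b c = LP f a c := by
  unfold LP
  rw [← List.prod_append, ← List.map_append]
  congr 1
  have h := List.range'_append (s := a) (m := b - a) (n := c - b) (step := 1)
  simp only [one_mul] at h
  rw [show a + (b - a) = b by omega] at h
  rw [h, show b - a + (c - b) = c - a by omega]

lemma step (hμ : IsInvFAPM μ) {η : ℝ} (hη : 0 < η) (s : ℕ → G) (p : ℕ) (C : Set G)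
    (hC : η < μ C) :
    ∃ a b, p ≤ a ∧ a < b ∧ b ≤ p + stepN η ∧ stepδ η < μ (C ∩ (LP s a b)⁻¹ • C) := by
  have hM : 2 ≤ (stepN η : ℝ) * η := by
    have h2 : (2 / η) ≤ (stepN η : ℝ) := Nat.le_ceil _
    calc (2 : ℝ) = (2 / η) * η := by field_simp
      _ ≤ (stepN η : ℝ) * η := mul_le_mul_of_nonneg_right h2 hη.le
  obtain ⟨i, j, hij, hjM, hbig⟩ := pigeon hμ (stepN η) η hM (fun j => LP s p (p + j) • C)
    (fun j _ => by rw [meas_smul hμ]; exact hC)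
  refine ⟨p + i, p + j, Nat.le_add_right _ _, by omega, by omega, ?_⟩
  set u := LP s (p + i) (p + j) with hu
  have hkey : LP s p (p + i) * u = LP s p (p + j) := LP_append s (by omega) (by omega)
  have himg : LP s p (p + j) • (C ∩ u⁻¹ • C) = (LP s p (p + j) • C) ∩ (LP s p (p + i) • C) := by
    rw [Set.smul_set_inter, smul_smul]
    congr 2
    rw [← hkey]
    group
  have hmeq : μ (C ∩ u⁻¹ • C) = μ ((LP s p (p + i) • C) ∩ (LP s p (p + j) • C)) := by
    rw [← meas_smul hμ (LP s p (p + j)) (C ∩ u⁻¹ • C), himg, Set.inter_comm]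
  rw [hmeq]
  exact hbig

def Blocks (p : ℕ) : List (ℕ × ℕ) → ℕ → Prop
  | [], q => p ≤ q
  | pr :: l, q => p ≤ pr.1 ∧ pr.1 < pr.2 ∧ Blocks pr.2 l q

lemma Blocks_le : ∀ {m : List (ℕ × ℕ)} {p q : ℕ}, Blocks p m q → p ≤ q
  | [], _, _, h => h
  | _ :: _, _, _, h => h.1.trans (h.2.1.le.trans (Blocks_le h.2.2))

lemma Blocks_mono_left : ∀ {l : List (ℕ × ℕ)} {p p' q : ℕ}, Blocks p l q → p' ≤ p → Blocks p' l q
  | [], _, _, _, h, hp => hp.trans h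
  | _ :: _, _, _, _, h, hp => ⟨hp.trans h.1, h.2.1, h.2.2⟩

lemma Blocks_mono_right : ∀ (l : List (ℕ × ℕ)) {p q q' : ℕ}, Blocks p l q → q ≤ q' → Blocks p l q'
  | [], _, _, _, h, hq => h.trans hq
  | _ :: l, _, _, _, h, hq => ⟨h.1, h.2.1, Blocks_mono_right l h.2.2 hq⟩

lemma Blocks_sublist {m l : List (ℕ × ℕ)} (hml : m.Sublist l) :
    ∀ {p q : ℕ}, Blocks p l q → Blocks p m q := by
  induction hml with
  | slnil => intro p q h; exact h
  | cons pr _ ih =>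
    intro p q h
    exact Blocks_mono_left (ih h.2.2) (h.1.trans h.2.1.le)
  | cons_cons pr _ ih =>
    intro p q h
    exact ⟨h.1, h.2.1, ih h.2.2⟩

def blist (pr : ℕ × ℕ) : List ℕ := List.range' pr.1 (pr.2 - pr.1)

def flat (m : List (ℕ × ℕ)) : List ℕ := (m.map blist).flatten

lemma flat_mem : ∀ {m : List (ℕ × ℕ)} {p q : ℕ}, Blocks p m q → ∀ i ∈ flat m, p ≤ i ∧ i < q := by
  intro m
  induction m with
  | nil => intro p q _ i hi; simp [flat] at hi
  | cons pr m ih =>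
    intro p q h i hi
    simp only [flat, List.map_cons, List.flatten_cons, List.mem_append] at hi
    rcases hi with hi | hi
    · have hr := List.mem_range'_1.mp hi
      have hq : pr.2 ≤ q := Blocks_le h.2.2
      have h1 := h.1
      have h2 := h.2.1
      constructor <;> omega
    · have hres := ih h.2.2 i hi
      exact ⟨(h.1.trans h.2.1.le).trans hres.1, hres.2⟩

lemma flat_pairwise : ∀ {m : List (ℕ × ℕ)} {p q : ℕ}, Blocks p m q →
    (flat m).Pairwise (· < ·) := by
  intro m
  induction m with
  | nil => intro p q _; simp [flat]
  | cons pr m ih =>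
    intro p q h
    simp only [flat, List.map_cons, List.flatten_cons]
    rw [List.pairwise_append]
    refine ⟨List.pairwise_lt_range' _, ih h.2.2, ?_⟩
    intro x hx y hy
    have hxr := List.mem_range'_1.mp hx
    have hyr := (flat_mem h.2.2 y hy).1
    have h2 := h.2.1
    omega

lemma flat_ne {m : List (ℕ × ℕ)} {p q : ℕ} (h : Blocks p m q) (hne : m ≠ []) :
    flat m ≠ [] := by
  cases m with
  | nil => exact absurd rfl hne
  | cons pr m =>
    simp only [flat, List.map_cons, List.flatten_cons]
    intro hcontra
    have h2 := h.2.1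
    have : blist pr ≠ [] := by
      have : (blist pr).length = pr.2 - pr.1 := List.length_range'
      intro hnil
      rw [hnil] at this
      simp at this
      omega
    exact this (List.append_eq_nil_iff.mp hcontra).1

lemma flat_prod (f : ℕ → G) : ∀ (m : List (ℕ × ℕ)),
    ((flat m).map f).prod = (m.map (fun pr => LP f pr.1 pr.2)).prod := by
  intro m
  induction m with
  | nil => simp [flat]
  | cons pr m ih =>
    simp only [flat, List.map_cons, List.flatten_cons, List.map_append, List.prod_append,
      List.prod_cons]
    rw [← ih]
    rfl

lemma mem_FPinc_of_list {n : ℕ} (s : Fin n → G) (l : List ℕ) (hne : l ≠ [])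
    (hsort : l.Pairwise (· < ·)) (hlt : ∀ i ∈ l, i < n) :
    (l.map (fun i => if h : i < n then s ⟨i, h⟩ else 1)).prod ∈ FPinc s := by
  set l' : List (Fin n) := l.pmap (fun i h => (⟨i, h⟩ : Fin n)) hlt with hl'
  have hsort' : l'.Pairwise (· < ·) := by
    rw [hl', List.pairwise_pmap]
    exact hsort.imp fun hab => fun h₁ h₂ => hab
  have hnodup : l'.Nodup := hsort'.imp fun hab => ne_of_lt hab
  set F : Finset (Fin n) := ⟨(l' : Multiset (Fin n)), hnodup⟩ with hF
  have hFne : F.Nonempty := by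
    obtain ⟨i, hi⟩ := List.exists_mem_of_ne_nil l hne
    refine ⟨⟨i, hlt i hi⟩, ?_⟩
    rw [hF, Finset.mem_def]
    show _ ∈ (l' : Multiset (Fin n))
    rw [Multiset.mem_coe, hl', List.mem_pmap]
    exact ⟨i, hi, rfl⟩
  have hsorteq : F.sort (· ≤ ·) = l' := by
    apply List.Perm.eq_of_pairwise' (Finset.pairwise_sort _ _) (hsort'.imp le_of_lt) ?_
    rw [← Multiset.coe_eq_coe, Finset.sort_eq]
  refine ⟨F, hFne, ?_⟩
  rw [hsorteq, hl', List.map_pmap]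
  congr 1
  rw [← List.pmap_eq_map (p := fun i => i < n) (l := l) hlt]
  apply List.pmap_congr_left
  intro i hi h₁ h₂
  rw [dif_pos h₁]

noncomputable def iterN : ℕ → ℝ → ℕ
  | 0, _ => 0
  | k + 1, η => stepN η + iterN k (stepδ η)

noncomputable def iterδ : ℕ → ℝ → ℝ
  | 0, η => η
  | k + 1, η => iterδ k (stepδ η)

lemma iterδ_pos : ∀ (k : ℕ) {η : ℝ}, 0 < η → 0 < iterδ k η
  | 0, _, h => h
  | k + 1, _, h => iterδ_pos k (stepδ_pos h)

lemma iter (hμ : IsInvFAPM μ) (s : ℕ → G) (k : ℕ) :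
    ∀ {η : ℝ}, 0 < η → ∀ (p : ℕ) (C : Set G), η < μ C →
    ∃ (bl : List (ℕ × ℕ)) (C' : Set G), bl.length = k ∧ Blocks p bl (p + iterN k η) ∧
      C' ⊆ C ∧ iterδ k η < μ C' ∧
      ∀ m, m.Sublist bl → m ≠ [] → ((m.map (fun pr => LP s pr.1 pr.2)).prod) • C' ⊆ C := by
  induction k with
  | zero =>
    intro η hη p C hC
    refine ⟨[], C, rfl, ?_, Set.Subset.rfl, hC, ?_⟩
    · show p ≤ p + iterN 0 η
      omega
    · intro m hm hne
      exact absurd (List.sublist_nil.mp hm) hne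
  | succ k ih =>
    intro η hη p C hC
    obtain ⟨a, b, hpa, hab, hbN, hμ₁⟩ := step hμ hη s p C hC
    set u := LP s a b with hu
    set C₁ := C ∩ u⁻¹ • C with hC₁
    have hC₁C : C₁ ⊆ C := Set.inter_subset_left
    have huC₁ : u • C₁ ⊆ C := by
      rw [hC₁, Set.smul_set_inter, smul_smul, mul_inv_cancel, one_smul]
      exact Set.inter_subset_right
    obtain ⟨bl', C', hlen, hbl, hsub, hδ, hprop⟩ := ih (stepδ_pos hη) b C₁ hμ₁
    refine ⟨(a, b) :: bl', C', by simp [hlen], ⟨hpa, hab, ?_⟩, hsub.trans hC₁C, hδ, ?_⟩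
    · apply Blocks_mono_right _ hbl
      show b + iterN k (stepδ η) ≤ p + (stepN η + iterN k (stepδ η))
      omega
    · intro m hm hne
      cases hm with
      | cons _ h => exact (hprop m h hne).trans hC₁C
      | cons_cons _ h =>
        rename_i l₁
        have hw : ((l₁.map (fun pr => LP s pr.1 pr.2)).prod) • C' ⊆ C₁ := by
          rcases eq_or_ne l₁ [] with rfl | hne'
          · simpa using hsub
          · exact hprop l₁ h hne'
        simp only [List.map_cons, List.prod_cons]
        rw [mul_smul]
        exact (Set.smul_set_mono hw).trans huC₁

noncomputable def multN (k : ℕ) : ℕ → ℝ → ℕ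
  | 0, _ => 0
  | r + 1, η => max (iterN k η) (multN k r (iterδ k η))

noncomputable def multδ (k : ℕ) : ℕ → ℝ → ℝ
  | 0, η => η
  | r + 1, η => multδ k r (iterδ k η)

lemma multδ_pos (k : ℕ) : ∀ (r : ℕ) {η : ℝ}, 0 < η → 0 < multδ k r η
  | 0, _, h => h
  | r + 1, _, h => multδ_pos k r (iterδ_pos k h)

lemma multi (hμ : IsInvFAPM μ) (k : ℕ) :
    ∀ (r : ℕ) (ss : ℕ → ℕ → G) {η : ℝ}, 0 < η → ∀ C : Set G, η < μ C →
    ∃ (BL : ℕ → List (ℕ × ℕ)) (C' : Set G), C' ⊆ C ∧ multδ k r η < μ C' ∧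
      ∀ i < r, (BL i).length = k ∧ Blocks 0 (BL i) (multN k r η) ∧
        ∀ m, m.Sublist (BL i) → m ≠ [] → ((m.map (fun pr => LP (ss i) pr.1 pr.2)).prod) • C' ⊆ C := by
  intro r
  induction r with
  | zero =>
    intro ss η hη C hC
    exact ⟨fun _ => [], C, Set.Subset.rfl, hC, fun i hi => absurd hi (by omega)⟩
  | succ r ih =>
    intro ss η hη C hC
    obtain ⟨bl₀, C₁, hlen₀, hB₀, hC₁C, hδ₁, hp₀⟩ := iter hμ (ss 0) k hη 0 C hC
    obtain ⟨BL', C', hC'C₁, hδ', hprops⟩ := ih (fun i => ss (i + 1)) (iterδ_pos k hη) C₁ hδ₁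
    refine ⟨fun i => Nat.casesOn i bl₀ BL', C', hC'C₁.trans hC₁C, hδ', ?_⟩
    intro i hi
    cases i with
    | zero =>
      refine ⟨hlen₀, ?_, ?_⟩
      · apply Blocks_mono_right _ hB₀
        show 0 + iterN k η ≤ max (iterN k η) (multN k r (iterδ k η))
        simp
      · intro m hm hne
        exact (Set.smul_set_mono hC'C₁).trans (hp₀ m hm hne)
    | succ i =>
      obtain ⟨h1, h2, h3⟩ := hprops i (by omega)
      refine ⟨h1, ?_, fun m hm hne => (h3 m hm hne).trans hC₁C⟩
      apply Blocks_mono_right _ h2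
      show multN k r (iterδ k η) ≤ max (iterN k η) (multN k r (iterδ k η))
      simp

lemma fp_to_sublist {k : ℕ} (f : ℕ → G) (bl : List (ℕ × ℕ)) (hlen : bl.length = k) (u : G)
    (hu : u ∈ FPinc (fun j : Fin k =>
      LP f (bl.get (Fin.cast hlen.symm j)).1 (bl.get (Fin.cast hlen.symm j)).2)) :
    ∃ m, m.Sublist bl ∧ m ≠ [] ∧ u = (m.map (fun pr => LP f pr.1 pr.2)).prod := by
  obtain ⟨F, hFne, hFu⟩ := hu
  set is : List (Fin bl.length) := (F.sort (· ≤ ·)).map (Fin.cast hlen.symm) with his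
  have hpw : is.Pairwise (fun x1 x2 : Fin bl.length => (x1 : ℕ) < (x2 : ℕ)) := by
    rw [his]
    refine List.Pairwise.map _ ?_ (Finset.sortedLT_sort F).pairwise
    intro a b hab
    exact hab
  refine ⟨is.map bl.get, List.map_getElem_sublist hpw, ?_, ?_⟩
  · obtain ⟨x, hx⟩ := hFne
    have hxs : x ∈ F.sort (· ≤ ·) := (Finset.mem_sort _).mpr hx
    intro hcontra
    rw [his] at hcontra
    simp only [List.map_map, List.map_eq_nil_iff] at hcontra
    rw [hcontra] at hxs
    exact absurd hxs List.not_mem_nil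
  · rw [hFu, his, List.map_map, List.map_map]
    rfl

end IDPaux

open IDPaux in
theorem iterated_density_pigeonhole {G : Type*} [Group G] (μ : Set G → ℝ)
    (hμ : IsInvFAPM μ) (ε : ℝ) (hε : 0 < ε) (k r : ℕ) :
    ∃ (k' : ℕ) (δ : ℝ), 0 < δ ∧
      ∀ A : Set G, ε < μ A →
        ∀ s : Fin r → Fin k' → G,
          ∃ t : Fin r → Fin k → G,
            (∀ i, FPinc (t i) ⊆ FPinc (s i)) ∧
              ∃ B ⊆ A, δ < μ B ∧ ∀ i : Fin r, ∀ u ∈ FPinc (t i), (u * ·) '' B ⊆ A := by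
  classical
  refine ⟨multN k r ε, multδ k r ε, multδ_pos k r hε, ?_⟩
  intro A hA s
  set ss : ℕ → ℕ → G := fun i n =>
    if hi : i < r then (if hn : n < multN k r ε then s ⟨i, hi⟩ ⟨n, hn⟩ else 1) else 1 with hss
  obtain ⟨BL, B, hBA, hδB, hprops⟩ := multi hμ k r ss hε A hA
  have hlen : ∀ i : Fin r, (BL (i : ℕ)).length = k := fun i => (hprops i i.2).1
  have hssi : ∀ i : Fin r, ss (i : ℕ) =
      fun n => if h : n < multN k r ε then s i ⟨n, h⟩ else 1 := by
    intro i
    funext n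
    simp only [hss, dif_pos i.isLt, Fin.eta]
  refine ⟨fun i j => LP (ss (i : ℕ)) ((BL (i : ℕ)).get (Fin.cast (hlen i).symm j)).1
    ((BL (i : ℕ)).get (Fin.cast (hlen i).symm j)).2, ?_, B, hBA, hδB, ?_⟩
  · intro i u hu
    obtain ⟨m, hm, hmne, hmu⟩ := fp_to_sublist (ss (i : ℕ)) (BL (i : ℕ)) (hlen i) u hu
    have hBm : Blocks 0 m (multN k r ε) := Blocks_sublist hm (hprops i i.2).2.1
    have key := mem_FPinc_of_list (s i) (flat m) (flat_ne hBm hmne) (flat_pairwise hBm)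
      (fun x hx => (flat_mem hBm x hx).2)
    rw [hmu, ← flat_prod (ss (i : ℕ)) m, hssi i]
    exact key
  · intro i u hu
    obtain ⟨m, hm, hmne, hmu⟩ := fp_to_sublist (ss (i : ℕ)) (BL (i : ℕ)) (hlen i) u hu
    have := (hprops i i.2).2.2 m hm hmne
    show u • B ⊆ A
    rw [hmu]
    exact this
end

section
/- Let G be a group. If A ⊆ G is piecewise syndetic and A = C_0 ∪ C_1 ∪ … ∪ C_r, then some C_i is piecewise syndetic. -/
open scoped Pointwise

section

variable {G : Type*} [Group G]

/-- The set `F⁻¹A = ⋃_{f ∈ F} f⁻¹A`. -/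
def invTranslates (F : Finset G) (A : Set G) : Set G := {g | ∃ f ∈ F, f * g ∈ A}

theorem invTranslates_mono (F : Finset G) {A B : Set G} (h : A ⊆ B) :
    invTranslates F A ⊆ invTranslates F B :=
  fun _ ⟨f, hf, hfg⟩ => ⟨f, hf, h hfg⟩

theorem invTranslates_empty (F : Finset G) : invTranslates F ∅ = ∅ := by
  simp [invTranslates]

theorem subset_invTranslates {F : Finset G} (hF : 1 ∈ F) (A : Set G) :
    A ⊆ invTranslates F A :=
  fun _ hg => ⟨1, hF, by rwa [one_mul]⟩

theorem invTranslates_union (F : Finset G) (A B : Set G) :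
    invTranslates F (A ∪ B) = invTranslates F A ∪ invTranslates F B := by
  ext g
  simp only [invTranslates, Set.mem_union, Set.mem_ofPred_eq]
  grind

theorem invTranslates_invTranslates [DecidableEq G] (E F : Finset G) (A : Set G) :
    invTranslates E (invTranslates F A) ⊆ invTranslates (F * E) A := by
  rintro g ⟨e, he, f, hf, hfeg⟩
  exact ⟨f * e, Finset.mul_mem_mul hf he, by rwa [mul_assoc]⟩

theorem RightThick.mono {T T' : Set G} (hT : RightThick T) (h : T ⊆ T') : RightThick T' := by
  intro F
  obtain ⟨t, ht, hFt⟩ := hT F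
  exact ⟨t, h ht, fun f hf => h (hFt f hf)⟩

theorem not_rightThick_empty : ¬ RightThick (∅ : Set G) := by
  intro h
  obtain ⟨t, ht, -⟩ := h ∅
  exact ht

theorem leftSyndetic_compl_of_not_rightThick {B : Set G} (hB : ¬ RightThick B) :
    LeftSyndetic Bᶜ := by
  classical
  simp only [RightThick, not_forall, not_exists, not_and] at hB
  obtain ⟨F, hF⟩ := hB
  refine ⟨insert 1 F, fun g => ?_⟩
  by_cases hg : g ∈ B
  · obtain ⟨f, hf, hfg⟩ := hF g hg
    exact ⟨f, Finset.mem_insert_of_mem hf, hfg⟩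
  · exact ⟨1, Finset.mem_insert_self _ _, by rwa [one_mul]⟩

theorem RightThick.invTranslates_inter {S T : Set G} {F : Finset G}
    (hF : ∀ g : G, ∃ f ∈ F, f * g ∈ S) (hT : RightThick T) :
    RightThick (invTranslates F (S ∩ T)) := by
  classical
  intro E
  obtain ⟨t, -, hFEt⟩ := hT (F * insert 1 E)
  have hmem : ∀ e ∈ insert 1 E, e * t ∈ invTranslates F (S ∩ T) := by
    intro e he
    obtain ⟨f, hf, hfet⟩ := hF (e * t)
    refine ⟨f, hf, hfet, ?_⟩
    simpa only [mul_assoc] using hFEt (f * e) (Finset.mul_mem_mul hf he)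
  refine ⟨t, ?_, fun e he => hmem e (Finset.mem_insert_of_mem he)⟩
  simpa only [one_mul] using hmem 1 (Finset.mem_insert_self _ _)

theorem piecewiseSyndetic_iff_exists_rightThick_invTranslates {A : Set G} :
    PiecewiseSyndetic A ↔ ∃ F : Finset G, RightThick (invTranslates F A) := by
  classical
  constructor
  · rintro ⟨S, T, ⟨F, hF⟩, hT, rfl⟩
    exact ⟨F, hT.invTranslates_inter hF⟩
  · rintro ⟨F, hF⟩
    refine ⟨A ∪ (invTranslates F A)ᶜ, A ∪ invTranslates F A, ⟨insert 1 F, fun g => ?_⟩,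
      hF.mono Set.subset_union_right, by rw [← Set.union_inter_distrib_left]; simp⟩
    by_cases hg : g ∈ invTranslates F A
    · obtain ⟨f, hf, hfg⟩ := hg
      exact ⟨f, Finset.mem_insert_of_mem hf, Or.inl hfg⟩
    · exact ⟨1, Finset.mem_insert_self _ _, Or.inr (by rwa [one_mul])⟩

theorem not_piecewiseSyndetic_empty : ¬ PiecewiseSyndetic (∅ : Set G) := by
  rw [piecewiseSyndetic_iff_exists_rightThick_invTranslates]
  rintro ⟨F, hF⟩
  rw [invTranslates_empty] at hF
  exact not_rightThick_empty hF

theorem RightThick.piecewiseSyndetic {T : Set G} (hT : RightThick T) : PiecewiseSyndetic T :=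
  piecewiseSyndetic_iff_exists_rightThick_invTranslates.mpr
    ⟨{1}, hT.mono (subset_invTranslates (Finset.mem_singleton_self 1) T)⟩

theorem PiecewiseSyndetic.of_invTranslates {F : Finset G} {A : Set G}
    (h : PiecewiseSyndetic (invTranslates F A)) : PiecewiseSyndetic A := by
  classical
  obtain ⟨E, hE⟩ := piecewiseSyndetic_iff_exists_rightThick_invTranslates.mp h
  exact piecewiseSyndetic_iff_exists_rightThick_invTranslates.mpr
    ⟨F * E, hE.mono (invTranslates_invTranslates E F A)⟩

theorem RightThick.piecewiseSyndetic_of_union {A B : Set G} (hAB : RightThick (A ∪ B))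
    (hB : ¬ RightThick B) : PiecewiseSyndetic A := by
  obtain ⟨F, hF⟩ := leftSyndetic_compl_of_not_rightThick hB
  refine piecewiseSyndetic_iff_exists_rightThick_invTranslates.mpr
    ⟨F, (hAB.invTranslates_inter hF).mono (invTranslates_mono F ?_)⟩
  rintro g ⟨hgB, hgA | hgB'⟩
  exacts [hgA, absurd hgB' hgB]

theorem PiecewiseSyndetic.of_union {A B : Set G} (h : PiecewiseSyndetic (A ∪ B)) :
    PiecewiseSyndetic A ∨ PiecewiseSyndetic B := by
  obtain ⟨F, hF⟩ := piecewiseSyndetic_iff_exists_rightThick_invTranslates.mp h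
  rw [invTranslates_union] at hF
  by_cases hB : RightThick (invTranslates F B)
  · exact Or.inr hB.piecewiseSyndetic.of_invTranslates
  · exact Or.inl (hF.piecewiseSyndetic_of_union hB).of_invTranslates

theorem PiecewiseSyndetic.exists_of_biUnion {ι : Type*} (s : Finset ι) (C : ι → Set G)
    (h : PiecewiseSyndetic (⋃ i ∈ s, C i)) : ∃ i ∈ s, PiecewiseSyndetic (C i) := by
  classical
  induction s using Finset.induction_on with
  | empty =>
    simp only [Finset.notMem_empty, Set.iUnion_of_empty, Set.iUnion_empty] at h
    exact absurd h not_piecewiseSyndetic_empty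
  | insert a s _ ih =>
    rw [Finset.set_biUnion_insert] at h
    rcases h.of_union with ha | hs
    · exact ⟨a, Finset.mem_insert_self a s, ha⟩
    · obtain ⟨i, hi, hCi⟩ := ih hs
      exact ⟨i, Finset.mem_insert_of_mem hi, hCi⟩

end

theorem piecewiseSyndetic_partition_regular {G : Type*} [Group G] (A : Set G)
    (hA : PiecewiseSyndetic A) (r : ℕ) (C : Fin (r + 1) → Set G)
    (hC : A = ⋃ i, C i) :
    ∃ i : Fin (r + 1), PiecewiseSyndetic (C i) := by
  rw [hC, show (⋃ i, C i) = ⋃ i ∈ Finset.univ, C i by simp] at hA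
  obtain ⟨i, -, hi⟩ := hA.exists_of_biUnion Finset.univ C
  exact ⟨i, hi⟩
end

section
/- Let G be a group. If A ⊆ G is piecewise syndetic, then the set {g ∈ G : {g⁻¹·a : a ∈ A} ∩ A is piecewise syndetic} is syndetic. -/
open Filter

attribute [local instance] Ultrafilter.mul Ultrafilter.semigroup

section Ultra

variable {M : Type*} [Semigroup M]

private lemma mem_mul' (U V : Ultrafilter M) (s : Set M) :
    s ∈ U * V ↔ {m | {m' | m * m' ∈ s} ∈ V} ∈ U := by
  have h := Ultrafilter.eventually_mul U V (· ∈ s)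
  simp only [Filter.eventually_iff, Ultrafilter.mem_coe, Set.setOf_mem_eq] at h
  exact h

private lemma mem_pure_mul (g : M) (V : Ultrafilter M) (s : Set M) :
    s ∈ (pure g : Ultrafilter M) * V ↔ {m' | g * m' ∈ s} ∈ V := by
  rw [mem_mul']
  exact Ultrafilter.mem_pure

end Ultra

private lemma exists_ultrafilter_forall {α ι : Type*} (Z : ι → Set α)
    (h : ∀ E : Finset ι, (⋂ i ∈ E, Z i).Nonempty) :
    ∃ q : Ultrafilter α, ∀ i, Z i ∈ q := by
  classical
  have key : ∀ T : Finset (Set α), ↑T ⊆ Set.range Z →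
      ∃ E : Finset ι, (⋂ i ∈ E, Z i) ⊆ ⋂₀ ↑T := by
    intro T
    induction T using Finset.induction_on with
    | empty => intro _; exact ⟨∅, by simp⟩
    | @insert C T hC ih =>
      intro hsub
      obtain ⟨i, hi⟩ := hsub (Finset.mem_insert_self C T)
      obtain ⟨E, hE⟩ := ih (fun x hx => hsub (Finset.mem_insert_of_mem hx))
      refine ⟨insert i E, ?_⟩
      rw [Finset.coe_insert, Set.sInter_insert, Finset.set_biInter_insert]
      exact Set.inter_subset_inter (hi ▸ le_refl _) hE
  obtain ⟨q, hq⟩ := Ultrafilter.exists_ultrafilter_of_finite_inter_nonempty (Set.range Z)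
    (fun T hT => by obtain ⟨E, hE⟩ := key T hT; exact (h E).mono hE)
  exact ⟨q, fun i => hq ⟨i, rfl⟩⟩

/-- A nonempty closed left ideal in `βG`. -/
private def IsLI {G : Type*} [Group G] (L : Set (Ultrafilter G)) : Prop :=
  IsClosed L ∧ L.Nonempty ∧ ∀ p ∈ L, ∀ q : Ultrafilter G, q * p ∈ L

private lemma exists_minimal_LI {G : Type*} [Group G] (L0 : Set (Ultrafilter G)) (h : IsLI L0) :
    ∃ L, L ⊆ L0 ∧ Minimal IsLI L := by
  have hchaincond : ∀ c ⊆ {L : Set (Ultrafilter G) | IsLI L}, IsChain (· ⊆ ·) c → c.Nonempty →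
      ∃ lb ∈ {L : Set (Ultrafilter G) | IsLI L}, ∀ s ∈ c, lb ⊆ s := by
    intro c hc hchain hne
    haveI : Nonempty c := hne.to_subtype
    refine ⟨⋂₀ c, ⟨?_, ?_, ?_⟩, fun s hs => Set.sInter_subset_of_mem hs⟩
    · exact isClosed_sInter fun L hL => (hc hL).1
    · apply IsCompact.nonempty_sInter_of_directed_nonempty_isCompact_isClosed
      · intro x hx y hy
        rcases hchain.total hx hy with h' | h'
        · exact ⟨x, hx, le_refl _, h'⟩
        · exact ⟨y, hy, h', le_refl _⟩
      · exact fun U hU => (hc hU).2.1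
      · exact fun U hU => ((hc hU).1).isCompact
      · exact fun U hU => (hc hU).1
    · intro p hp q
      exact Set.mem_sInter.2 fun L hL => (hc hL).2.2 p (Set.mem_sInter.1 hp L hL) q
  obtain ⟨L, hL1, hL2⟩ := zorn_superset_nonempty {L | IsLI L} hchaincond L0 h
  exact ⟨L, hL1, hL2⟩

private lemma syndetic_of_minimal {G : Type*} [Group G] {L : Set (Ultrafilter G)}
    (hL : Minimal IsLI L) {p : Ultrafilter G} (hp : p ∈ L) {s : Set G} (hs : s ∈ p) :
    LeftSyndetic {g : G | {x | g * x ∈ s} ∈ p} := by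
  classical
  set B : Set G := {g : G | {x | g * x ∈ s} ∈ p} with hB
  by_contra hnot
  rw [LeftSyndetic] at hnot
  push_neg at hnot
  -- build an ultrafilter q avoiding all translates of B
  have hfip : ∀ E : Finset (Finset G), (⋂ F ∈ E, {g : G | ∀ f ∈ F, f * g ∉ B}).Nonempty := by
    intro E
    obtain ⟨g, hg⟩ := hnot (E.sup id)
    refine ⟨g, Set.mem_iInter₂.2 fun F hF f hf => hg f ?_⟩
    exact Finset.le_sup (f := id) hF hf
  obtain ⟨q, hq⟩ := exists_ultrafilter_forall
    (fun F : Finset G => {g : G | ∀ f ∈ F, f * g ∉ B}) hfip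
  have hqp : q * p ∈ L := hL.1.2.2 p hp q
  -- the left ideal generated by q * p
  have hLI : IsLI (Set.range (· * (q * p))) := by
    refine ⟨(isCompact_range (Ultrafilter.continuous_mul_left (q * p))).isClosed,
      ⟨p * (q * p), ⟨p, rfl⟩⟩, ?_⟩
    rintro _ ⟨r, rfl⟩ r'
    exact ⟨r' * r, mul_assoc _ _ _⟩
  have hsub : Set.range (· * (q * p)) ⊆ L := by
    rintro _ ⟨r, rfl⟩
    exact hL.1.2.2 _ hqp r
  have hLsub : L ⊆ Set.range (· * (q * p)) := hL.2 hLI hsub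
  obtain ⟨r, hr⟩ := hLsub hp
  rw [← hr] at hs
  obtain ⟨x, hx⟩ := Ultrafilter.nonempty_of_mem ((mem_mul' r (q * p) s).1 hs)
  have hx2 := (mem_mul' q p _).1 hx
  have hgood : {y : G | x * y ∈ B} ∈ q := by
    have : {m : G | {m' | m * m' ∈ {m' | x * m' ∈ s}} ∈ p} = {y : G | x * y ∈ B} := by
      ext y
      simp only [hB, Set.mem_setOf_eq, mul_assoc]
    rwa [this] at hx2
  have hbad : {y : G | x * y ∉ B} ∈ q := by
    have := hq {x}
    simpa using this
  obtain ⟨y, h1, h2⟩ := Ultrafilter.nonempty_of_mem (Filter.inter_mem hgood hbad)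
  exact h2 h1

private lemma pws_of_minimal {G : Type*} [Group G] {L : Set (Ultrafilter G)}
    (hL : Minimal IsLI L) {p : Ultrafilter G} (hp : p ∈ L) {s : Set G} (hs : s ∈ p) :
    PiecewiseSyndetic s := by
  classical
  obtain ⟨F0, hF0⟩ := syndetic_of_minimal hL hp hs
  set F : Finset G := insert 1 F0 with hF
  set T : Set G := {x : G | ∃ f ∈ F, f * x ∈ s} with hT
  have hmem : ∀ e : G, {z : G | e * z ∈ T} ∈ p := by
    intro e
    obtain ⟨f, hf, hfe⟩ := hF0 e
    refine Filter.mem_of_superset hfe fun z hz => ?_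
    exact ⟨f, Finset.mem_insert_of_mem hf, by rw [← mul_assoc]; exact hz⟩
  have hthick : RightThick T := by
    intro E
    have hD : (⋂ e ∈ insert (1 : G) E, {z : G | e * z ∈ T}) ∈ p :=
      (Filter.biInter_finset_mem _).2 fun e _ => hmem e
    obtain ⟨t, ht⟩ := Ultrafilter.nonempty_of_mem hD
    rw [Set.mem_iInter₂] at ht
    refine ⟨t, ?_, fun e he => ht e (Finset.mem_insert_of_mem he)⟩
    have := ht 1 (Finset.mem_insert_self 1 E)
    simpa using this
  have hsT : s ⊆ T := fun a ha => ⟨1, Finset.mem_insert_self 1 F0, by simpa using ha⟩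
  refine ⟨s ∪ Tᶜ, T, ?_, hthick, ?_⟩
  · refine ⟨F, fun g => ?_⟩
    by_cases hg : g ∈ T
    · obtain ⟨f, hf, hfs⟩ := hg
      exact ⟨f, hf, Or.inl hfs⟩
    · exact ⟨1, Finset.mem_insert_self 1 F0, Or.inr (by simpa using hg)⟩
  · ext x
    constructor
    · exact fun hx => ⟨Or.inl hx, hsT hx⟩
    · rintro ⟨hx1 | hx1, hx2⟩
      · exact hx1
      · exact absurd hx2 hx1

private lemma thick_translate {G : Type*} [Group G] {A S T : Set G}
    (hS : LeftSyndetic S) (hT : RightThick T) (hA : A = S ∩ T) :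
    ∃ F : Finset G, RightThick {x : G | ∃ f ∈ F, f * x ∈ A} := by
  classical
  obtain ⟨F, hF⟩ := hS
  refine ⟨F, fun E => ?_⟩
  set E1 : Finset G := (F ×ˢ insert (1 : G) E).image (fun p => p.1 * p.2) with hE1
  obtain ⟨t, htT, htE⟩ := hT E1
  have key : ∀ e ∈ insert (1 : G) E, e * t ∈ {x : G | ∃ f ∈ F, f * x ∈ A} := by
    intro e he
    obtain ⟨f, hf, hfS⟩ := hF (e * t)
    refine ⟨f, hf, hA ▸ ⟨hfS, ?_⟩⟩
    have : (f * e) * t ∈ T :=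
      htE _ (Finset.mem_image.2 ⟨(f, e), Finset.mem_product.2 ⟨hf, he⟩, rfl⟩)
    rwa [mul_assoc] at this
  refine ⟨t, ?_, fun e he => key e (Finset.mem_insert_of_mem he)⟩
  have := key 1 (Finset.mem_insert_self 1 E)
  simpa using this



theorem piecewiseSyndetic_pigeonhole {G : Type*} [Group G] (A : Set G)
    (hA : PiecewiseSyndetic A) :
    LeftSyndetic {g : G | PiecewiseSyndetic ((g⁻¹ * ·) '' A ∩ A)} := by
  classical
  obtain ⟨S, T, hS, hT, hAe⟩ := hA
  obtain ⟨F, hF⟩ := thick_translate hS hT hAe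
  set T' : Set G := {x : G | ∃ f ∈ F, f * x ∈ A} with hT'
  -- an ultrafilter q containing all left translates of T'
  have hfip : ∀ E : Finset G, (⋂ e ∈ E, {x : G | e * x ∈ T'}).Nonempty := by
    intro E
    obtain ⟨t, htT, htE⟩ := hF E
    exact ⟨t, Set.mem_iInter₂.2 fun e he => htE e he⟩
  obtain ⟨q, hq⟩ := exists_ultrafilter_forall (fun e : G => {x : G | e * x ∈ T'}) hfip
  -- the closed left ideal βG * q
  have hLI0 : IsLI (Set.range (· * q)) := by
    refine ⟨(isCompact_range (Ultrafilter.continuous_mul_left q)).isClosed,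
      ⟨q * q, ⟨q, rfl⟩⟩, ?_⟩
    rintro _ ⟨r, rfl⟩ r'
    exact ⟨r' * r, mul_assoc _ _ _⟩
  obtain ⟨L, hLsub, hLmin⟩ := exists_minimal_LI _ hLI0
  obtain ⟨p', hp'⟩ := hLmin.1.2.1
  -- T' belongs to p'
  have hT'p : T' ∈ p' := by
    obtain ⟨r, hr⟩ := hLsub hp'
    rw [← hr, mem_mul']
    have : {m : G | {m' | m * m' ∈ T'} ∈ q} = Set.univ :=
      Set.eq_univ_of_forall fun m => hq m
    rw [this]
    exact Filter.univ_mem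
  -- T' = ⋃ f ∈ F, {x | f * x ∈ A}; pick one piece in p'
  have : (⋃ f ∈ F, {x : G | f * x ∈ A}) ∈ p' := by
    have he : (⋃ f ∈ F, {x : G | f * x ∈ A}) = T' := by
      ext x; simp [hT']
    rw [he]; exact hT'p
  obtain ⟨f, hfF, hfp⟩ := (Ultrafilter.finite_biUnion_mem_iff F.finite_toSet).1 this
  set p : Ultrafilter G := (pure f : Ultrafilter G) * p' with hpdef
  have hpL : p ∈ L := hLmin.1.2.2 p' hp' _
  have hAp : A ∈ p := (mem_pure_mul f p' A).2 hfp
  -- B is syndetic, and B is contained in the target set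
  obtain ⟨F', hF'⟩ := syndetic_of_minimal hLmin hpL hAp
  refine ⟨F', fun g => ?_⟩
  obtain ⟨f', hf', hgB⟩ := hF' g
  refine ⟨f', hf', ?_⟩
  -- (f' * g) ∈ B, so {x | (f'*g)*x ∈ A} ∩ A ∈ p, hence piecewise syndetic
  have hC : ({x : G | (f' * g) * x ∈ A} ∩ A) ∈ p := Filter.inter_mem hgB hAp
  have hpws := pws_of_minimal hLmin hpL hC
  have heq : ((f' * g)⁻¹ * ·) '' A ∩ A = {x : G | (f' * g) * x ∈ A} ∩ A := by
    ext x
    constructor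
    · rintro ⟨⟨a, ha, rfl⟩, hx2⟩
      refine ⟨?_, hx2⟩
      show (f' * g) * ((f' * g)⁻¹ * a) ∈ A
      rwa [mul_inv_cancel_left]
    · rintro ⟨hx1, hx2⟩
      exact ⟨⟨(f' * g) * x, hx1, by show (f' * g)⁻¹ * ((f' * g) * x) = x; rw [inv_mul_cancel_left]⟩, hx2⟩
  show PiecewiseSyndetic (((f' * g)⁻¹ * ·) '' A ∩ A)
  rw [heq]
  exact hpws
end
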